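/- For any field k, an algebraic set V ⊆ kⁿ, and a ∈ k[V], the localization k[V]_{⟨a⟩} of k[V] at the multiplicative set Σ_a is k-isomorphic to the canonical localization (k[V]_a)_M of the usual localization k[V]_a. -/

import Mathlib

set_option synthInstance.maxHeartbeats 800000
set_option maxHeartbeats 1600000

open MvPolynomial

/-- The coordinate ring `k[V]`, realised as the algebra of polynomial functions on `V`. -/
noncomputable def coordRing (k : Type) [Field k] (n : ℕ) (V : Set (Fin n → k)) :
    Subalgebra k (↥V → k) :=
  (MvPolynomial.aeval (fun i (x : ↥V) => (x : Fin n → k) i) :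
    MvPolynomial (Fin n) k →ₐ[k] (↥V → k)).range

variable (k : Type) [Field k] (A : Type) [CommRing A] [Algebra k A]

/-- `homogEval D b c` is the evaluation `D#(b, c)` in `A` of the homogenization
`D#(X̄,Y) = Y^{deg D}·D(X̄/Y)` of `D` at the tuple `b` and the element `c`. -/
noncomputable def homogEval {m : ℕ} (D : MvPolynomial (Fin m) k) (b : Fin m → A) (c : A) :
    A :=
  ∑ s ∈ D.support, algebraMap k A (D.coeff s) * (∏ i, b i ^ s i) *
    c ^ (D.totalDegree - s.sum fun _ e => e)

/-- The generating set of the multiplicative set `Σ_a`: all elements `a^m · D#(b̄, aⁿ)` for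
`D` a polynomial over `k` with no rational zero in `k`. -/
def sigmaSet (a : A) : Set A :=
  {x | ∃ (m n mv : ℕ) (D : MvPolynomial (Fin mv) k) (b : Fin mv → A),
    (∀ v : Fin mv → k, eval v D ≠ 0) ∧ x = a ^ m * homogEval k A D b (a ^ n)}

/-- The set `M_B` of all evaluations in `B` of polynomials over `k` with no rational zero
in `k`. -/
def MAset (B : Type) [CommRing B] [Algebra k B] : Set B :=
  {x | ∃ (m : ℕ) (D : MvPolynomial (Fin m) k) (b : Fin m → B),
    (∀ v : Fin m → k, eval v D ≠ 0) ∧ x = aeval b D}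

/-! Clearing denominators in `A_a` turns `D(b̄ / aⁿ)` into `D#(b̄, aⁿ) / a^(n·deg D)`. Hence
every generator of `Σ_a` becomes, in `A_a`, an element of `M_{A_a}` times a power of `a`, and every
element of the submonoid generated by `M_{A_a}`, times a suitable power of `a`, comes from `Σ_a`.
So `Σ_a` and the preimage in `A` of the submonoid generated by `M_{A_a}` and `a` have the same
saturation, and localizing `A` at the latter is the iterated localization `(A_a)_M`. -/

section

variable {k A}

open Submonoid IsLocalization

theorem aeval_mul_pow_totalDegree {m : ℕ} (D : MvPolynomial (Fin m) k) (b c : Fin m → A)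
    (t : A) (h : ∀ i, b i * t = c i) :
    aeval b D * t ^ D.totalDegree = homogEval k A D c t := by
  rw [homogEval, aeval_def, eval₂_eq', Finset.sum_mul]
  refine Finset.sum_congr rfl fun s hs => ?_
  have hdeg : t ^ D.totalDegree = t ^ (∑ i, s i) * t ^ (D.totalDegree - s.sum fun _ e => e) := by
    rw [← pow_add, ← Finsupp.sum_fintype s (fun _ e => e) fun _ => rfl,
      Nat.add_sub_cancel' (le_totalDegree hs)]
  have hprod : (∏ i, b i ^ s i) * t ^ ∑ i, s i = ∏ i, c i ^ s i := by
    simp only [← Finset.prod_pow_eq_pow_sum, ← Finset.prod_mul_distrib, ← mul_pow, h]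
  rw [hdeg, ← hprod]
  ring

theorem map_homogEval {A' : Type} [CommRing A'] [Algebra k A'] (f : A →ₐ[k] A') {m : ℕ}
    (D : MvPolynomial (Fin m) k) (c : Fin m → A) (t : A) :
    f (homogEval k A D c t) = homogEval k A' D (fun i => f (c i)) (f t) := by
  simp only [homogEval, map_sum, map_mul, map_prod, map_pow, AlgHom.commutes]

theorem self_mem_sigmaSet (a : A) : a ∈ sigmaSet k A a := by
  refine ⟨1, 0, 0, 1, Fin.elim0, fun _ => by simp, ?_⟩
  simp [homogEval]

theorem powers_le_closure_sigmaSet (a : A) :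
    powers a ≤ closure (sigmaSet k A a) :=
  powers_le.2 (subset_closure (self_mem_sigmaSet a))

variable (a : A)

theorem algebraMap_homogEval {m : ℕ} (D : MvPolynomial (Fin m) k)
    (b : Fin m → Localization.Away a) (c : Fin m → A) (p : ℕ)
    (h : ∀ i, b i * algebraMap A _ (a ^ p) = algebraMap A _ (c i)) :
    algebraMap A (Localization.Away a) (homogEval k A D c (a ^ p)) =
      aeval b D * algebraMap A _ a ^ (p * D.totalDegree) := by
  have hmap := map_homogEval (IsScalarTower.toAlgHom k A (Localization.Away a)) D c (a ^ p)
  simp only [IsScalarTower.toAlgHom_apply] at hmap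
  rw [hmap, ← aeval_mul_pow_totalDegree D b _ _ h, map_pow, pow_mul]

theorem exists_mul_pow_eq_algebraMap_of_mem_closure_MAset {t : Localization.Away a}
    (ht : t ∈ closure (MAset k (Localization.Away a))) :
    ∃ u ∈ closure (sigmaSet k A a), ∃ N : ℕ,
      t * algebraMap A _ (a ^ N) = algebraMap A _ u := by
  induction ht using closure_induction with
  | mem x hx =>
    obtain ⟨m, D, b, hD, rfl⟩ := hx
    obtain ⟨⟨_, p, rfl⟩, hb⟩ := exist_integer_multiples_of_finite (powers a) b
    choose c hc using hb
    refine ⟨homogEval k A D c (a ^ p),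
      subset_closure ⟨0, p, m, D, c, hD, by rw [pow_zero, one_mul]⟩, p * D.totalDegree, ?_⟩
    rw [algebraMap_homogEval a D b c p fun i => by rw [hc i, Algebra.smul_def, mul_comm],
      map_pow]
  | one => exact ⟨1, one_mem _, 0, by simp⟩
  | mul _ _ _ _ hx hy =>
    obtain ⟨u, hu, N, hxu⟩ := hx
    obtain ⟨v, hv, M, hyv⟩ := hy
    refine ⟨u * v, mul_mem hu hv, N + M, ?_⟩
    rw [pow_add, map_mul, map_mul, ← hxu, ← hyv]
    ring

theorem closure_sigmaSet_le :
    closure (sigmaSet k A a) ≤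
      localizationLocalizationSubmodule (powers a) (closure (MAset k (Localization.Away a))) := by
  refine closure_le.2 ?_
  rintro _ ⟨m, n, mv, D, b, hD, rfl⟩
  set b' : Fin mv → Localization.Away a := fun i => mk' _ (b i) (⟨a ^ n, n, rfl⟩ : powers a)
  have hb' : ∀ i, b' i * algebraMap A _ (a ^ n) = algebraMap A _ (b i) := fun i =>
    mk'_spec _ (b i) (⟨a ^ n, n, rfl⟩ : powers a)
  refine mem_localizationLocalizationSubmodule.2
    ⟨⟨aeval b' D, subset_closure ⟨mv, D, b', hD, rfl⟩⟩,
      ⟨a ^ (m + n * D.totalDegree), _, rfl⟩, ?_⟩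
  rw [map_mul, algebraMap_homogEval a D b' b n hb', map_pow, map_pow, pow_add]
  ring

theorem exists_dvd_mem_closure_sigmaSet {x : A}
    (hx : x ∈ localizationLocalizationSubmodule (powers a)
      (closure (MAset k (Localization.Away a)))) :
    ∃ y ∈ closure (sigmaSet k A a), x ∣ y := by
  obtain ⟨⟨t, ht⟩, ⟨_, j, rfl⟩, hxt⟩ := mem_localizationLocalizationSubmodule.1 hx
  obtain ⟨u, hu, N, htu⟩ := exists_mul_pow_eq_algebraMap_of_mem_closure_MAset a ht
  have : algebraMap A (Localization.Away a) (x * a ^ N) = algebraMap A _ (u * a ^ j) := by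
    rw [map_mul, hxt, map_mul, ← htu]
    ring
  obtain ⟨⟨_, q, rfl⟩, hq⟩ := exists_of_eq (M := powers a) this
  have hpow := powers_le_closure_sigmaSet (k := k) a
  exact ⟨a ^ q * (u * a ^ j), mul_mem (hpow ⟨q, rfl⟩) (mul_mem hu (hpow ⟨j, rfl⟩)),
    ⟨a ^ q * a ^ N, by rw [← hq]; ring⟩⟩

instance isLocalization_closure_sigmaSet :
    IsLocalization (closure (sigmaSet k A a))
      (Localization (closure (MAset k (Localization.Away a)))) :=
  (iff_of_le_of_exists_dvd _ _ (closure_sigmaSet_le a)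
    fun _ hx => exists_dvd_mem_closure_sigmaSet a hx).2
    (localization_localization_isLocalization _ _ _)

variable (k) in
noncomputable def localizationSigmaAlgEquiv :
    Localization (closure (sigmaSet k A a)) ≃ₐ[k]
      Localization (closure (MAset k (Localization.Away a))) :=
  (IsLocalization.algEquiv (closure (sigmaSet k A a)) _ _).restrictScalars k

end

theorem localization_sigma_iso_canonical (n : ℕ) (V : Set (Fin n → k))
    (a : ↥(coordRing k n V)) :
    Nonempty
      (Localization (Submonoid.closure (sigmaSet k ↥(coordRing k n V) a)) ≃ₐ[k]
        Localization (Submonoid.closure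
          (MAset k (Localization (Submonoid.powers a))))) :=
  ⟨localizationSigmaAlgEquiv k a⟩
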